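/- Let z_1,...,z_n be independent Bernoulli random variables with parameters q_1,...,q_n, λ = Σ q_i, and ℓ a positive integer. Then min(λ, ℓ) ≤ 7 · E[min(Σ z_i, ℓ)]. -/

import Mathlib

open Finset Real

/-- Probability of the outcome `z` of `n` independent Bernoulli random variables with
parameters `q i`. -/
noncomputable def berWeight {n : ℕ} (q : Fin n → ℝ) (z : Fin n → Bool) : ℝ :=
  ∏ i, if z i then q i else 1 - q i

def count {n : ℕ} (z : Fin n → Bool) : ℕ := ∑ i, if z i then 1 else 0

/-- `Hber q ℓ = E[min(Σᵢ zᵢ, ℓ)]` for independent `zᵢ ~ Ber(q i)`. -/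
noncomputable def Hber {n : ℕ} (q : Fin n → ℝ) (ℓ : ℕ) : ℝ :=
  ∑ z : Fin n → Bool, berWeight q z * min ((count z : ℝ)) (ℓ : ℝ)

/-- `Ptail q m = P[Σᵢ zᵢ ≥ m]` for independent `zᵢ ~ Ber(q i)`. -/
noncomputable def Ptail {n : ℕ} (q : Fin n → ℝ) (m : ℕ) : ℝ :=
  ∑ z ∈ Finset.univ.filter (fun z : Fin n → Bool => m ≤ count z), berWeight q z

/-!
Let `S = Σ zᵢ` and `p = P[S ≥ ℓ]`. Clearly `E[min(S, ℓ)] ≥ ℓ p`. On the other hand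
`min(S, ℓ) ≥ Σᵢ zᵢ 1{S ≤ ℓ}`, and by independence
`E[zᵢ 1{S ≤ ℓ}] = qᵢ P[S - zᵢ + 1 ≤ ℓ] ≥ qᵢ P[S < ℓ] = qᵢ (1 - p)`,
so `E[min(S, ℓ)] ≥ λ (1 - p)`.
Hence `min(λ, ℓ) ≤ p ℓ + (1 - p) λ ≤ 2 E[min(S, ℓ)]`.
-/

section Bernoulli

variable {n : ℕ} {q : Fin n → ℝ}

noncomputable def berExpect (q : Fin n → ℝ) (f : (Fin n → Bool) → ℝ) : ℝ :=
  ∑ z, berWeight q z * f z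

lemma berWeight_nonneg (hq : ∀ i, q i ∈ Set.Icc (0 : ℝ) 1) (z : Fin n → Bool) :
    0 ≤ berWeight q z :=
  prod_nonneg fun i _ => by
    obtain ⟨h0, h1⟩ := hq i
    split <;> linarith

lemma sum_berWeight (q : Fin n → ℝ) : ∑ z, berWeight q z = 1 := by
  simp [berWeight, ← Fintype.prod_sum (fun i (b : Bool) => if b then q i else 1 - q i)]

lemma berWeight_insertNth (q : Fin (n + 1) → ℝ) (i : Fin (n + 1)) (b : Bool)
    (y : Fin n → Bool) :
    berWeight q (i.insertNth b y) = (if b then q i else 1 - q i) * berWeight (i.removeNth q) y := by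
  simp [berWeight, Fin.prod_univ_succAbove _ i, Fin.removeNth]

lemma berExpect_mono (hq : ∀ i, q i ∈ Set.Icc (0 : ℝ) 1) {f g : (Fin n → Bool) → ℝ}
    (hfg : ∀ z, f z ≤ g z) : berExpect q f ≤ berExpect q g :=
  sum_le_sum fun z _ => mul_le_mul_of_nonneg_left (hfg z) (berWeight_nonneg hq z)

lemma berExpect_const (q : Fin n → ℝ) (c : ℝ) : berExpect q (fun _ => c) = c := by
  rw [berExpect, ← sum_mul, sum_berWeight, one_mul]

lemma berExpect_const_mul (q : Fin n → ℝ) (c : ℝ) (f : (Fin n → Bool) → ℝ) :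
    berExpect q (fun z => c * f z) = c * berExpect q f := by
  simp only [berExpect, mul_sum, mul_left_comm]

lemma berExpect_one_sub (q : Fin n → ℝ) (f : (Fin n → Bool) → ℝ) :
    berExpect q (fun z => 1 - f z) = 1 - berExpect q f := by
  simp only [berExpect, mul_sub, mul_one, sum_sub_distrib, sum_berWeight]

lemma berExpect_sum {ι : Type*} (s : Finset ι) (q : Fin n → ℝ)
    (f : ι → (Fin n → Bool) → ℝ) :
    berExpect q (fun z => ∑ i ∈ s, f i z) = ∑ i ∈ s, berExpect q (f i) := by
  simp only [berExpect, mul_sum]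
  exact sum_comm

lemma sum_eq_sum_insertNth (i : Fin (n + 1)) (F : (Fin (n + 1) → Bool) → ℝ) :
    ∑ z, F z = ∑ b, ∑ y, F (i.insertNth b y) := by
  rw [← (Fin.insertNthEquiv (fun _ => Bool) i).sum_comp, Fintype.sum_prod_type]
  rfl

lemma berExpect_ite_true (q : Fin n → ℝ) (i : Fin n) (f : (Fin n → Bool) → ℝ) :
    berExpect q (fun z => if z i then f z else 0) =
      q i * berExpect q (fun z => f (Function.update z i true)) := by
  cases n with
  | zero => exact i.elim0
  | succ m =>
    simp only [berExpect, sum_eq_sum_insertNth i, Fintype.sum_bool, berWeight_insertNth,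
      Fin.insertNth_apply_same, Fin.update_insertNth, if_true, Bool.false_eq_true, if_false,
      mul_zero, sum_const_zero, add_zero, mul_assoc, ← mul_sum]
    ring

lemma Hber_eq_berExpect (q : Fin n → ℝ) (ℓ : ℕ) :
    Hber q ℓ = berExpect q (fun z => min (count z : ℝ) ℓ) := rfl

lemma Ptail_eq_berExpect (q : Fin n → ℝ) (m : ℕ) :
    Ptail q m = berExpect q (fun z => if m ≤ count z then 1 else 0) := by
  simp [Ptail, berExpect, sum_filter]

lemma count_update_true_le (z : Fin n → Bool) (i : Fin n) :
    count (Function.update z i true) ≤ count z + 1 := by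
  calc count (Function.update z i true)
      ≤ ∑ j, ((if z j then 1 else 0) + if j = i then 1 else 0) := by
        refine sum_le_sum fun j _ => ?_
        rcases eq_or_ne j i with rfl | hji
        · simp
        · simp [Function.update_of_ne hji]
    _ = count z + 1 := by simp [count, sum_add_distrib]

lemma sum_ite_le_min_count (z : Fin n → Bool) (ℓ : ℕ) :
    ∑ i, (if z i then (if count z ≤ ℓ then 1 else 0) else 0) ≤ min (count z : ℝ) ℓ := by
  by_cases h : count z ≤ ℓ
  · have hcount : (count z : ℝ) = ∑ i, if z i then 1 else 0 := by push_cast [count]; rfl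
    simp only [h, if_true, ← hcount, le_min_iff, le_refl, true_and]
    exact_mod_cast h
  · simp [h]

lemma mul_Ptail_le_Hber (hq : ∀ i, q i ∈ Set.Icc (0 : ℝ) 1) (ℓ : ℕ) :
    ℓ * Ptail q ℓ ≤ Hber q ℓ := by
  rw [Ptail_eq_berExpect, Hber_eq_berExpect, ← berExpect_const_mul]
  refine berExpect_mono hq fun z => ?_
  split_ifs with h
  · rw [mul_one, min_eq_right (by exact_mod_cast h)]
  · rw [mul_zero]
    positivity

lemma sum_mul_one_sub_Ptail_le_Hber (hq : ∀ i, q i ∈ Set.Icc (0 : ℝ) 1) (ℓ : ℕ) :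
    (∑ i, q i) * (1 - Ptail q ℓ) ≤ Hber q ℓ := by
  have hstep (z : Fin n → Bool) (i : Fin n) :
      1 - (if ℓ ≤ count z then 1 else 0) ≤
        (if count (Function.update z i true) ≤ ℓ then 1 else 0 : ℝ) := by
    have := count_update_true_le z i
    split_ifs <;> norm_num
    omega
  calc (∑ i, q i) * (1 - Ptail q ℓ)
      = ∑ i, q i * berExpect q (fun z => 1 - if ℓ ≤ count z then 1 else 0) := by
        rw [berExpect_one_sub, ← Ptail_eq_berExpect, sum_mul]
    _ ≤ ∑ i, q i * berExpect q
          (fun z => if count (Function.update z i true) ≤ ℓ then 1 else 0) :=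
        sum_le_sum fun i _ => mul_le_mul_of_nonneg_left
          (berExpect_mono hq fun z => hstep z i) (hq i).1
    _ = berExpect q
          (fun z => ∑ i, if z i then (if count z ≤ ℓ then 1 else 0) else 0) := by
        simp only [berExpect_sum, berExpect_ite_true]
    _ ≤ Hber q ℓ := berExpect_mono hq fun z => sum_ite_le_min_count z ℓ

lemma Ptail_mem_Icc (hq : ∀ i, q i ∈ Set.Icc (0 : ℝ) 1) (m : ℕ) :
    Ptail q m ∈ Set.Icc (0 : ℝ) 1 := by
  rw [Ptail_eq_berExpect]
  constructor
  · simpa only [berExpect_const] using berExpect_mono hq (f := fun _ => 0) fun z => by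
      split_ifs <;> norm_num
  · simpa only [berExpect_const] using berExpect_mono hq (g := fun _ => 1) fun z => by
      split_ifs <;> norm_num

lemma min_sum_le_two_mul_Hber (hq : ∀ i, q i ∈ Set.Icc (0 : ℝ) 1) (ℓ : ℕ) :
    min (∑ i, q i) (ℓ : ℝ) ≤ 2 * Hber q ℓ := by
  obtain ⟨hp0, hp1⟩ := Ptail_mem_Icc hq ℓ
  set p := Ptail q ℓ
  calc min (∑ i, q i) (ℓ : ℝ)
      = p * min (∑ i, q i) ℓ + (1 - p) * min (∑ i, q i) ℓ := by ring
    _ ≤ p * ℓ + (1 - p) * ∑ i, q i :=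
        add_le_add (mul_le_mul_of_nonneg_left (min_le_right _ _) hp0)
          (mul_le_mul_of_nonneg_left (min_le_left _ _) (sub_nonneg.2 hp1))
    _ ≤ 2 * Hber q ℓ := by
        linarith [mul_Ptail_le_Hber hq ℓ, sum_mul_one_sub_Ptail_le_Hber hq ℓ]

end Bernoulli

theorem hcher_le_seven_hber_general (n : ℕ) (q : Fin n → ℝ) (hq : ∀ i, q i ∈ Set.Icc (0 : ℝ) 1)
    (lam : ℝ) (hlam : lam = ∑ i, q i) (ℓ : ℕ) :
    min lam (ℓ : ℝ) ≤ 7 * Hber q ℓ := by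
  have hHber : 0 ≤ Hber q ℓ :=
    le_trans (mul_nonneg ℓ.cast_nonneg (Ptail_mem_Icc hq ℓ).1) (mul_Ptail_le_Hber hq ℓ)
  rw [hlam]
  linarith [min_sum_le_two_mul_Hber hq ℓ]

/-- For independent `z_i ~ Ber(q_i)` with `λ = Σ q_i` and any positive integer `ℓ`,
`min(λ, ℓ) ≤ 7 · E[min(Σ z_i, ℓ)]`. -/
theorem hcher_le_seven_hber (n : ℕ) (q : Fin n → ℝ) (hq : ∀ i, q i ∈ Set.Icc (0 : ℝ) 1)
    (lam : ℝ) (hlam : lam = ∑ i, q i) (ℓ : ℕ) (hℓ : 1 ≤ ℓ) :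
    min lam (ℓ : ℝ) ≤ 7 * Hber q ℓ :=
  hcher_le_seven_hber_general n q hq lam hlam ℓ
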